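/- Let S_h ⊆ GL₂ of finite adeles of F be defined by S_h = Δ·{β : for all finite places v, β_v ∈ GL₂(O_{F,v}) and β_v ≡ [[μ,*],[0,*]] (mod N·O_{F,v}) for a unit μ ∈ O_F^× independent of v, with det β ∈ ℚ_𝔸^×}, where Δ consists of diagonal matrices diag(1,ξ) with ξ a unit idele. Then the arithmetic group Γ_S := GL₂(F) ∩ (S_h·G_{a+}) equals Γ_{F,1}⁺(N) = {γ ∈ GL₂(O_F) : det γ totally positive, γ ≡ [[*,*],[0,ζ]] (mod N·O_F) for some ζ ∈ O_F^×}. -/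

import Mathlib

/-!
An element of `F` lies in `𝓞 F` (resp. `(𝓞 F)ˣ`) as soon as it is integral (resp. a unit) in
every completion, and `N` divides an element of `𝓞 F` as soon as it does so in every completion.
Hence if `γ = (a b; c d) = diag(1, ξ) β` with `β` as in `S_h`, then `γ` is integral with unit
determinant, `N ∣ c` and `a ≡ μ (mod N)`; since `ad - bc = det γ` is a unit, this forces
`d ≡ μ⁻¹ det γ (mod N)`. Conversely, if `γ ∈ Γ⁺_{F,1}(N)` then
`γ = diag(1, det γ) · (diag(1, (det γ)⁻¹) γ)` exhibits it as an element of `S_h`, with a second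
factor of determinant `1`.
-/

open NumberField IsDedekindDomain

noncomputable section

variable (F : Type) [Field F] [NumberField F]

/-- `x` is a unit of the ring of integers of the `v`-adic completion. -/
def IsLocalUnit (v : HeightOneSpectrum (𝓞 F))
    (x : v.adicCompletion F) : Prop :=
  x ∈ v.adicCompletionIntegers F ∧
    ∃ y : v.adicCompletion F, y ∈ v.adicCompletionIntegers F ∧ x * y = 1

/-- Membership in the set `S_h = Δ·{β}` of the statement, for a `2×2` matrix
over the finite adele ring of `F`. -/
def InSh (N : ℕ)
    (M : Matrix (Fin 2) (Fin 2) (FiniteAdeleRing (𝓞 F) F)) : Prop :=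
  -- δ = diag(1, ξ) with ξ an everywhere-local-unit idele
  ∃ ξ : FiniteAdeleRing (𝓞 F) F,
    (∀ v : HeightOneSpectrum (𝓞 F), IsLocalUnit F v (ξ v)) ∧
    ∃ β : Matrix (Fin 2) (Fin 2) (FiniteAdeleRing (𝓞 F) F),
      M = Matrix.of ![![1, 0], ![0, ξ]] * β ∧
      -- β_v ∈ GL₂(O_{F,v}) for all finite places v
      (∀ (v : HeightOneSpectrum (𝓞 F)) (i j : Fin 2),
        (β i j) v ∈ v.adicCompletionIntegers F) ∧
      (∀ v : HeightOneSpectrum (𝓞 F), IsLocalUnit F v (β.det v)) ∧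
      -- β_v ≡ [[μ, *], [0, *]] (mod N·O_{F,v}) with μ ∈ O_F^× independent of v
      (∃ μ : (𝓞 F)ˣ, ∀ v : HeightOneSpectrum (𝓞 F),
        (∃ t ∈ v.adicCompletionIntegers F,
          (β 0 0) v - algebraMap (𝓞 F) (v.adicCompletion F) (μ : 𝓞 F)
            = (N : v.adicCompletion F) * t) ∧
        (∃ t ∈ v.adicCompletionIntegers F,
          (β 1 0) v = (N : v.adicCompletion F) * t)) ∧
      -- det β ∈ ℚ_𝔸^× : the component of det β at v is the rational number
      -- attached to the residue characteristic of v
      (∃ q : ℕ → ℚ, ∀ (v : HeightOneSpectrum (𝓞 F)) (p : ℕ), p.Prime →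
        (p : 𝓞 F) ∈ v.asIdeal →
          β.det v = algebraMap F (v.adicCompletion F) (algebraMap ℚ F (q p)))

theorem dvd_sub_unit_of_dvd_mul_sub {R : Type*} [CommRing R] {N a b : R} {u μ : Rˣ}
    (hab : N ∣ a * b - u) (ha : N ∣ a - μ) : N ∣ b - ↑(μ⁻¹ * u) := by
  have hb : b - ↑(μ⁻¹ * u) = ↑μ⁻¹ * ((a * b - u) - (a - μ) * b) := by
    simp only [Units.val_mul]
    linear_combination (b : R) * (Units.inv_mul μ).symm
  rw [hb]
  exact (dvd_sub hab (ha.mul_right b)).mul_left _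

theorem Matrix.dvd_mul_sub_det_fin_two {R : Type*} [CommRing R] {N : R}
    (g : Matrix (Fin 2) (Fin 2) R) (h : N ∣ g 1 0) : N ∣ g 0 0 * g 1 1 - g.det := by
  rw [Matrix.det_fin_two, sub_sub_cancel]
  exact h.mul_left _

namespace IsDedekindDomain

variable {R K : Type*} [CommRing R] [IsDedekindDomain R] [Field K] [Algebra R K]
  [IsFractionRing R K]

namespace HeightOneSpectrum

theorem algebraMap_mem_adicCompletionIntegers_iff (v : HeightOneSpectrum R) (x : K) :
    algebraMap K (v.adicCompletion K) x ∈ v.adicCompletionIntegers K ↔ v.valuation K x ≤ 1 := by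
  rw [mem_adicCompletionIntegers, ← valuedAdicCompletion_eq_valuation']
  rfl

theorem exists_algebraMap_eq_of_forall_mem_adicCompletionIntegers {x : K}
    (h : ∀ v : HeightOneSpectrum R,
      algebraMap K (v.adicCompletion K) x ∈ v.adicCompletionIntegers K) :
    ∃ r : R, algebraMap R K r = x :=
  mem_integers_of_valuation_le_one K x fun v =>
    (algebraMap_mem_adicCompletionIntegers_iff v x).1 (h v)

theorem exists_map_eq_of_forall_mem_adicCompletionIntegers {m n : Type*} (γ : Matrix m n K)
    (h : ∀ i j (v : HeightOneSpectrum R),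
      algebraMap K (v.adicCompletion K) (γ i j) ∈ v.adicCompletionIntegers K) :
    ∃ γ' : Matrix m n R, γ'.map (algebraMap R K) = γ := by
  choose γ' hγ' using fun i j =>
    exists_algebraMap_eq_of_forall_mem_adicCompletionIntegers (h i j)
  exact ⟨Matrix.of γ', Matrix.ext hγ'⟩

theorem dvd_iff_forall_exists_mem_adicCompletionIntegers {n a : R} (hn : n ≠ 0) :
    n ∣ a ↔ ∀ v : HeightOneSpectrum R, ∃ t ∈ v.adicCompletionIntegers K,
      algebraMap R (v.adicCompletion K) a = algebraMap R (v.adicCompletion K) n * t := by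
  constructor
  · rintro ⟨c, rfl⟩ v
    exact ⟨_, coe_mem_adicCompletionIntegers v c, map_mul _ _ _⟩
  · intro h
    have hnK : algebraMap R K n ≠ 0 := (map_ne_zero_iff _ (IsFractionRing.injective R K)).2 hn
    obtain ⟨c, hc⟩ := exists_algebraMap_eq_of_forall_mem_adicCompletionIntegers
      (x := algebraMap R K a / algebraMap R K n) fun v => by
        obtain ⟨t, ht, hat⟩ := h v
        rw [IsScalarTower.algebraMap_apply R K (v.adicCompletion K) a,
          IsScalarTower.algebraMap_apply R K (v.adicCompletion K) n] at hat
        rwa [map_div₀, hat, mul_div_cancel_left₀ _ ((map_ne_zero _).2 hnK)]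
    refine ⟨c, IsFractionRing.injective R K ?_⟩
    rw [map_mul, hc, mul_div_cancel₀ _ hnK]

theorem natCast_dvd_iff_forall_exists_mem_adicCompletionIntegers [CharZero R]
    {N : ℕ} (hN : N ≠ 0) {a : R} :
    (N : R) ∣ a ↔ ∀ v : HeightOneSpectrum R, ∃ t ∈ v.adicCompletionIntegers K,
      algebraMap R (v.adicCompletion K) a = (N : v.adicCompletion K) * t := by
  simp only [dvd_iff_forall_exists_mem_adicCompletionIntegers (K := K)
    (Nat.cast_ne_zero.2 hN : (N : R) ≠ 0), map_natCast]

end HeightOneSpectrum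

namespace FiniteAdeleRing

theorem algebraMap_apply' (x : K) (v : HeightOneSpectrum R) :
    algebraMap K (FiniteAdeleRing R K) x v = algebraMap K (v.adicCompletion K) x := rfl

theorem mul_apply (x y : FiniteAdeleRing R K) (v : HeightOneSpectrum R) :
    (x * y) v = x v * y v := rfl

theorem one_apply (v : HeightOneSpectrum R) : (1 : FiniteAdeleRing R K) v = 1 := rfl

end FiniteAdeleRing

open HeightOneSpectrum FiniteAdeleRing in
theorem exists_map_eq_of_mapMatrix_eq_diagonal_mul {n : Type*} [Fintype n] [DecidableEq n]
    {γ : Matrix n n K} {d : n → FiniteAdeleRing R K} {β : Matrix n n (FiniteAdeleRing R K)}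
    (hγ : (algebraMap K (FiniteAdeleRing R K)).mapMatrix γ = Matrix.diagonal d * β)
    (hd : ∀ i (v : HeightOneSpectrum R), d i v ∈ v.adicCompletionIntegers K)
    (hβ : ∀ (v : HeightOneSpectrum R) i j, β i j v ∈ v.adicCompletionIntegers K) :
    ∃ γ' : Matrix n n R, γ'.map (algebraMap R K) = γ ∧
      ∀ i j (v : HeightOneSpectrum R),
        algebraMap R (v.adicCompletion K) (γ' i j) = d i v * β i j v := by
  have hentry : ∀ i j, algebraMap K (FiniteAdeleRing R K) (γ i j) = d i * β i j := fun i j => by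
    rw [← Matrix.diagonal_mul, ← hγ, RingHom.mapMatrix_apply, Matrix.map_apply]
  obtain ⟨γ', hγ'⟩ := exists_map_eq_of_forall_mem_adicCompletionIntegers (R := R) γ
    fun i j v => by
      rw [← algebraMap_apply', hentry, mul_apply]
      exact mul_mem (hd i v) (hβ v i j)
  refine ⟨γ', hγ', fun i j v => ?_⟩
  rw [← mul_apply, ← hentry, ← congr_fun₂ hγ' i j, IsScalarTower.algebraMap_apply R K]
  rfl

end IsDedekindDomain

open IsDedekindDomain.HeightOneSpectrum IsDedekindDomain.FiniteAdeleRing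

local notation "𝔸" => FiniteAdeleRing (𝓞 F) F

theorem IsLocalUnit.mul {v : HeightOneSpectrum (𝓞 F)} {x y : v.adicCompletion F}
    (hx : IsLocalUnit F v x) (hy : IsLocalUnit F v y) : IsLocalUnit F v (x * y) := by
  obtain ⟨hx, x', hx', hxx'⟩ := hx
  obtain ⟨hy, y', hy', hyy'⟩ := hy
  exact ⟨mul_mem hx hy, x' * y', mul_mem hx' hy', by rw [mul_mul_mul_comm, hxx', hyy', one_mul]⟩

theorem isLocalUnit_one (v : HeightOneSpectrum (𝓞 F)) : IsLocalUnit F v 1 :=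
  ⟨one_mem _, 1, one_mem _, one_mul 1⟩

theorem isLocalUnit_algebraMap_units (v : HeightOneSpectrum (𝓞 F)) (u : (𝓞 F)ˣ) :
    IsLocalUnit F v (algebraMap (𝓞 F) (v.adicCompletion F) u) :=
  ⟨coe_mem_adicCompletionIntegers v _, algebraMap (𝓞 F) _ ↑u⁻¹,
    coe_mem_adicCompletionIntegers v _, by rw [← map_mul, Units.mul_inv, map_one]⟩

theorem exists_units_algebraMap_eq_of_forall_isLocalUnit {x : F} (hx : x ≠ 0)
    (h : ∀ v : HeightOneSpectrum (𝓞 F), IsLocalUnit F v (algebraMap F (v.adicCompletion F) x)) :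
    ∃ u : (𝓞 F)ˣ, algebraMap (𝓞 F) F u = x := by
  obtain ⟨r, hr⟩ := exists_algebraMap_eq_of_forall_mem_adicCompletionIntegers fun v => (h v).1
  obtain ⟨s, hs⟩ := exists_algebraMap_eq_of_forall_mem_adicCompletionIntegers (x := x⁻¹)
    fun v => by
      obtain ⟨-, y, hy, hxy⟩ := h v
      rwa [map_inv₀, inv_eq_of_mul_eq_one_right hxy]
  refine ⟨Units.mkOfMulEqOne r s (IsFractionRing.injective (𝓞 F) F ?_), hr⟩
  rw [map_mul, hr, hs, mul_inv_cancel₀ hx, map_one]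

theorem exists_integral_lift_of_inSh {N : ℕ} (hN : N ≠ 0) {γ : Matrix (Fin 2) (Fin 2) F}
    (hγ : γ.det ≠ 0) (h : InSh F N fun i j => algebraMap F 𝔸 (γ i j)) :
    ∃ γ' : Matrix (Fin 2) (Fin 2) (𝓞 F), (∀ i j, ((γ' i j : 𝓞 F) : F) = γ i j) ∧
      IsUnit γ'.det ∧ (N : 𝓞 F) ∣ γ' 1 0 ∧ ∃ ζ : (𝓞 F)ˣ, (N : 𝓞 F) ∣ γ' 1 1 - ζ := by
  obtain ⟨ξ, hξ, β, hM, hβ, hdetβ, ⟨μ, hμ⟩, -⟩ := h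
  rw [show Matrix.of ![![1, 0], ![0, ξ]] = Matrix.diagonal ![1, ξ] from
    (Matrix.diagonal_fin_two ![1, ξ]).symm] at hM
  obtain ⟨γ', hγ', hcomp⟩ := exists_map_eq_of_mapMatrix_eq_diagonal_mul hM
    (fun i v => by fin_cases i; exacts [one_mem _, (hξ v).1]) hβ
  have hdet : algebraMap F 𝔸 γ.det = ξ * β.det := by
    rw [RingHom.map_det, show (algebraMap F 𝔸).mapMatrix γ = _ from hM, Matrix.det_mul,
      Matrix.det_diagonal, Fin.prod_univ_two]
    simp
  obtain ⟨u, hu⟩ := exists_units_algebraMap_eq_of_forall_isLocalUnit F hγ fun v => by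
    rw [← algebraMap_apply', hdet, mul_apply]
    exact (hξ v).mul F (hdetβ v)
  have hdetγ' : γ'.det = u :=
    IsFractionRing.injective (𝓞 F) F (by rw [RingHom.map_det, RingHom.mapMatrix_apply, hγ', hu])
  have h10 : (N : 𝓞 F) ∣ γ' 1 0 := by
    refine (natCast_dvd_iff_forall_exists_mem_adicCompletionIntegers (K := F) hN).2 fun v => ?_
    obtain ⟨t, ht, htβ⟩ := (hμ v).2
    refine ⟨ξ v * t, mul_mem (hξ v).1 ht, (hcomp 1 0 v).trans ?_⟩
    rw [htβ]
    exact mul_left_comm _ _ _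
  have h00 : (N : 𝓞 F) ∣ γ' 0 0 - μ := by
    refine (natCast_dvd_iff_forall_exists_mem_adicCompletionIntegers (K := F) hN).2 fun v => ?_
    obtain ⟨t, ht, htβ⟩ := (hμ v).1
    refine ⟨t, ht, ?_⟩
    rw [map_sub, ← htβ]
    exact congrArg (· - _) ((hcomp 0 0 v).trans (one_mul _))
  refine ⟨γ', fun i j => congr_fun₂ hγ' i j, hdetγ' ▸ u.isUnit, h10, μ⁻¹ * u, ?_⟩
  exact dvd_sub_unit_of_dvd_mul_sub (hdetγ' ▸ γ'.dvd_mul_sub_det_fin_two h10) h00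

theorem inSh_mapMatrix_diagonal_mul {N : ℕ} (hN : N ≠ 0) (u : (𝓞 F)ˣ)
    (g : Matrix (Fin 2) (Fin 2) (𝓞 F)) (hg : g.det = 1) (μ : (𝓞 F)ˣ)
    (h00 : (N : 𝓞 F) ∣ g 0 0 - μ) (h10 : (N : 𝓞 F) ∣ g 1 0) :
    InSh F N ((algebraMap (𝓞 F) 𝔸).mapMatrix (Matrix.diagonal ![1, (u : 𝓞 F)] * g)) := by
  set f := algebraMap (𝓞 F) 𝔸
  have hdet : (f.mapMatrix g).det = 1 := by rw [← RingHom.map_det, hg, map_one]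
  refine ⟨f u, fun v => isLocalUnit_algebraMap_units F v u, f.mapMatrix g, ?_,
    fun v i j => coe_mem_adicCompletionIntegers v _, fun v => ?_,
    ⟨μ, fun v => ⟨?_, ?_⟩⟩, ⟨fun _ => 1, fun v p _ _ => ?_⟩⟩
  · rw [map_mul]
    congr 1
    ext i j
    fin_cases i <;> fin_cases j <;> simp [f]
  · rw [hdet, one_apply]
    exact isLocalUnit_one F v
  · obtain ⟨t, ht, hgt⟩ :=
      (natCast_dvd_iff_forall_exists_mem_adicCompletionIntegers (K := F) hN).1 h00 v
    exact ⟨t, ht, by rw [← hgt, map_sub]; rfl⟩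
  · exact (natCast_dvd_iff_forall_exists_mem_adicCompletionIntegers (K := F) hN).1 h10 v
  · rw [hdet, one_apply, map_one, map_one]

theorem inSh_of_integral_lift {N : ℕ} (hN : N ≠ 0) {γ : Matrix (Fin 2) (Fin 2) F}
    (γ' : Matrix (Fin 2) (Fin 2) (𝓞 F)) (hγ' : ∀ i j, ((γ' i j : 𝓞 F) : F) = γ i j)
    (hdet : IsUnit γ'.det) (h10 : (N : 𝓞 F) ∣ γ' 1 0) (ζ : (𝓞 F)ˣ)
    (h11 : (N : 𝓞 F) ∣ γ' 1 1 - ζ) :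
    InSh F N fun i j => algebraMap F 𝔸 (γ i j) := by
  obtain ⟨u, hu⟩ := hdet
  set g := Matrix.diagonal ![1, ((u⁻¹ : (𝓞 F)ˣ) : 𝓞 F)] * γ'
  have hγ : (fun i j => algebraMap F 𝔸 (γ i j)) =
      (algebraMap (𝓞 F) 𝔸).mapMatrix (Matrix.diagonal ![1, (u : 𝓞 F)] * g) := by
    have hD : Matrix.diagonal ![1, (u : 𝓞 F)] * Matrix.diagonal ![1, ((u⁻¹ : (𝓞 F)ˣ) : 𝓞 F)]
        = 1 := by
      rw [Matrix.diagonal_mul_diagonal, ← Matrix.diagonal_one]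
      congr 1
      ext i
      fin_cases i <;> simp
    rw [← mul_assoc, hD, one_mul]
    ext i j : 2
    rw [← hγ' i j]
    rfl
  rw [hγ]
  refine inSh_mapMatrix_diagonal_mul F hN u g ?_ (ζ⁻¹ * u) ?_ ?_
  · rw [Matrix.det_mul, Matrix.det_diagonal, Fin.prod_univ_two, ← hu]
    simp
  · simpa [g, Matrix.diagonal_mul] using dvd_sub_unit_of_dvd_mul_sub
      (by rw [mul_comm, hu]; exact γ'.dvd_mul_sub_det_fin_two h10) h11
  · simpa [g, Matrix.diagonal_mul] using dvd_mul_of_dvd_right h10 ((u⁻¹ : (𝓞 F)ˣ) : 𝓞 F)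

theorem stmt18
    (N : ℕ) (hN : 0 < N)
    (γ : Matrix (Fin 2) (Fin 2) F) (hγ : γ.det ≠ 0) :
    (InSh F N (fun i j => algebraMap F (FiniteAdeleRing (𝓞 F) F) (γ i j)) ∧
      (∀ τ : F →+* ℝ, 0 < τ γ.det))
    ↔ (∃ γ' : Matrix (Fin 2) (Fin 2) (𝓞 F),
        (∀ i j, ((γ' i j : 𝓞 F) : F) = γ i j) ∧
        IsUnit γ'.det ∧
        (∀ τ : F →+* ℝ, 0 < τ γ.det) ∧
        (N : 𝓞 F) ∣ γ' 1 0 ∧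
        ∃ ζ : (𝓞 F)ˣ, (N : 𝓞 F) ∣ (γ' 1 1 - (ζ : 𝓞 F))) := by
  constructor
  · rintro ⟨hS, hpos⟩
    obtain ⟨γ', hγ', hdet, h10, h11⟩ := exists_integral_lift_of_inSh F hN.ne' hγ hS
    exact ⟨γ', hγ', hdet, hpos, h10, h11⟩
  · rintro ⟨γ', hγ', hdet, hpos, h10, ζ, h11⟩
    exact ⟨inSh_of_integral_lift F hN.ne' γ' hγ' hdet h10 ζ h11, hpos⟩
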